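/- arXiv:2109.15178 — 5 statements merged into one kernel-verified Lean document; each statement's English description precedes it below -/
import Mathlib

section
/- For every real symmetric traceless 3×3 matrix Q with tr(Q²) = 1, the signed biaxiality β̃(Q) := √6 · tr(Q³) lies in the closed interval [−1, 1]. -/
/-!
Diagonalise `Q` orthogonally: its eigenvalues `a, b, c` satisfy `a + b + c = 0`,
`a² + b² + c² = 1`, and `β̃(Q) = √6 (a³ + b³ + c³)`. For `a + b + c = 0` one has
`(a² + b² + c²)³ - 6 (a³ + b³ + c³)² = 2 ((a - b)(b - c)(c - a))²`, twice the discriminant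
of the characteristic polynomial, nonnegative because the eigenvalues are real.
Hence `β̃(Q)² ≤ 1`.
-/

open Matrix

theorem Matrix.IsHermitian.trace_pow_eq_sum_eigenvalues_pow {n 𝕜 : Type*} [RCLike 𝕜] [Fintype n]
    [DecidableEq n] {A : Matrix n n 𝕜} (hA : A.IsHermitian) (k : ℕ) :
    (A ^ k).trace = ∑ i, (hA.eigenvalues i : 𝕜) ^ k := by
  conv_lhs => rw [hA.spectral_theorem]
  rw [← map_pow, Unitary.conjStarAlgAut_apply, trace_mul_cycle, Unitary.coe_star_mul_self,
    one_mul, diagonal_pow, trace_diagonal]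
  simp

theorem six_mul_sq_sum_cubes_le_of_add_add_eq_zero {a b c : ℝ} (h : a + b + c = 0) :
    6 * (a ^ 3 + b ^ 3 + c ^ 3) ^ 2 ≤ (a ^ 2 + b ^ 2 + c ^ 2) ^ 3 := by
  obtain rfl : c = -a - b := by linarith
  have discriminant : (a ^ 2 + b ^ 2 + (-a - b) ^ 2) ^ 3 - 6 * (a ^ 3 + b ^ 3 + (-a - b) ^ 3) ^ 2
      = 2 * ((a - b) * (b - (-a - b)) * ((-a - b) - a)) ^ 2 := by ring
  linarith [sq_nonneg ((a - b) * (b - (-a - b)) * ((-a - b) - a))]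

/-- For every real symmetric traceless 3×3 matrix `Q` with `tr(Q²) = 1`,
the signed biaxiality `β̃(Q) = √6 · tr(Q³)` lies in `[-1, 1]`. -/
theorem signed_biaxiality_mem_Icc
    (Q : Matrix (Fin 3) (Fin 3) ℝ) (hsymm : Q.IsSymm) (htr : Q.trace = 0)
    (hunit : (Q ^ 2).trace = 1) :
    Real.sqrt 6 * (Q ^ 3).trace ∈ Set.Icc (-1 : ℝ) 1 := by
  have hQ : Q.IsHermitian := isHermitian_iff_isSymm.mpr hsymm
  have trace_pow (k : ℕ) : (Q ^ k).trace = ∑ i, hQ.eigenvalues i ^ k := by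
    simpa using hQ.trace_pow_eq_sum_eigenvalues_pow k
  rw [← pow_one Q, trace_pow, Fin.sum_univ_three] at htr
  simp only [pow_one] at htr
  rw [trace_pow, Fin.sum_univ_three] at hunit
  have hsq : (Real.sqrt 6 * (Q ^ 3).trace) ^ 2 ≤ 1 := by
    rw [mul_pow, Real.sq_sqrt (by norm_num), trace_pow, Fin.sum_univ_three]
    simpa [hunit] using six_mul_sq_sum_cubes_le_of_add_add_eq_zero htr
  exact abs_le.mp ((sq_le_one_iff_abs_le_one _).mp hsq)
end

section
/- Let Q be a real symmetric traceless 3×3 matrix with tr(Q²) = 1. Then √6 · tr(Q³) = 1 if and only if there exists a unit vector n ∈ ℝ³ such that Q = √(3/2)·(n ⊗ n − (1/3)·Id). -/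
open Matrix

private lemma newton4 (Q : Matrix (Fin 3) (Fin 3) ℝ) :
    (Q^4).trace = Q.trace * (Q^3).trace - (((Q.trace)^2 - (Q^2).trace)/2) * (Q^2).trace
      + Q.det * Q.trace := by
  simp [Matrix.trace_fin_three, Matrix.det_fin_three, pow_succ, Matrix.mul_apply,
    Fin.sum_univ_three]
  ring

private lemma symm_sq_trace_zero (S : Matrix (Fin 3) (Fin 3) ℝ) (hs : S.IsSymm)
    (h : (S*S).trace = 0) : S = 0 := by
  have h' : ∑ i : Fin 3, ∑ j : Fin 3, (S i j)^2 = 0 := by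
    rw [Matrix.trace] at h
    convert h using 2 with i
    simp [Matrix.diag, Matrix.mul_apply]
    congr 1 with j
    rw [sq]
    congr 1
    exact (Matrix.IsSymm.apply hs j i).symm ▸ rfl
  have hz := (Finset.sum_eq_zero_iff_of_nonneg
    (fun i _ => Finset.sum_nonneg (fun j _ => sq_nonneg (S i j)))).1 h'
  funext i j
  have hij := (Finset.sum_eq_zero_iff_of_nonneg (fun j _ => sq_nonneg (S i j))).1
    (hz i (Finset.mem_univ i)) j (Finset.mem_univ j)
  simpa using pow_eq_zero_iff (n := 2) (by norm_num) |>.1 hij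

/-- Let `Q` be a real symmetric traceless 3×3 matrix with `tr(Q²) = 1`. Then
`√6 · tr(Q³) = 1` if and only if there exists a unit vector `n ∈ ℝ³` with
`Q = √(3/2) · (n ⊗ n - (1/3)·Id)` (positively uniaxial unit-norm tensor). -/
theorem signed_biaxiality_eq_one_iff_uniaxial
    (Q : Matrix (Fin 3) (Fin 3) ℝ) (hsymm : Q.IsSymm) (htr : Q.trace = 0)
    (hunit : (Q ^ 2).trace = 1) :
    Real.sqrt 6 * (Q ^ 3).trace = 1 ↔
      ∃ n : Fin 3 → ℝ, (∑ i, n i ^ 2 = 1) ∧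
        Q = Real.sqrt (3 / 2) •
          (Matrix.vecMulVec n n - (1 / 3 : ℝ) • (1 : Matrix (Fin 3) (Fin 3) ℝ)) := by
  have ha : Real.sqrt 6 ^ 2 = 6 := Real.sq_sqrt (by norm_num)
  set a := Real.sqrt 6 with ha_def
  have ha0 : 0 < a := Real.sqrt_pos.mpr (by norm_num)
  have hsq32 : Real.sqrt (3/2) = a / 2 := by
    rw [show (3:ℝ)/2 = 6/2^2 by norm_num, Real.sqrt_div (by norm_num : (0:ℝ) ≤ 6),
      Real.sqrt_sq (by norm_num : (0:ℝ) ≤ 2)]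
  constructor
  · intro hcube
    have h3 : (Q^3).trace = a/6 := by
      linear_combination (a/6)*hcube - ((Q^3).trace/6)*ha
    have h4 : (Q^4).trace = 1/2 := by rw [newton4, htr, hunit]; ring
    set S := Q^2 - (a/6)•Q - (1/3:ℝ)•(1:Matrix (Fin 3) (Fin 3) ℝ) with hS_def
    have hQ2symm : (Q^2)ᵀ = Q^2 := by rw [pow_two, transpose_mul, hsymm.eq, ← pow_two]
    have hSsymm : S.IsSymm := by
      show Sᵀ = S
      rw [hS_def]
      simp [transpose_sub, transpose_smul, Matrix.transpose_one, hQ2symm, hsymm.eq]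
    have htrSS : (S*S).trace = 0 := by
      have expand : (S*S).trace = (Q^4).trace - (a/3)*(Q^3).trace
          + (a^2/36 - 2/3)*(Q^2).trace + (a/9)*Q.trace + 1/3 := by
        simp [hS_def, Matrix.trace_fin_three, Matrix.mul_apply, pow_succ,
          Fin.sum_univ_three, Matrix.one_apply, Matrix.sub_apply, Matrix.smul_apply]
        ring
      rw [expand, h3, h4, htr, hunit]
      linear_combination (-1/36)*ha
    have hS0 : S = 0 := symm_sq_trace_zero S hSsymm htrSS
    have hmul : Q * Q = (a/6)•Q + (1/3:ℝ)•(1:Matrix (Fin 3) (Fin 3) ℝ) := by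
      have h := hS0
      rw [hS_def, sub_sub] at h
      rw [← pow_two]
      exact sub_eq_zero.mp h
    set P := (a/3)•Q + (1/3:ℝ)•(1:Matrix (Fin 3) (Fin 3) ℝ) with hP_def
    have hPP : P * P = P := by
      rw [hP_def]
      simp only [add_mul, mul_add, smul_mul_assoc, mul_smul_comm, one_mul, mul_one,
        hmul, smul_add, smul_smul]
      match_scalars
      · linear_combination (a/54)*ha
      · linear_combination (1/27)*ha
    have hPsymm : ∀ i k, P i k = P k i := by
      intro i k
      simp only [hP_def, Matrix.add_apply, Matrix.smul_apply, Matrix.one_apply,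
        smul_eq_mul]
      rw [hsymm.apply k i]
      by_cases h : i = k
      · subst h; rfl
      · rw [if_neg h, if_neg (Ne.symm h)]
    have hPP' : ∀ i k, ∑ l, P i l * P l k = P i k := fun i k => by
      rw [← Matrix.mul_apply, hPP]
    have htrP : P 0 0 + P 1 1 + P 2 2 = 1 := by
      have htp : P.trace = 1 := by
        rw [hP_def]
        simp [Matrix.trace_add, Matrix.trace_smul, Matrix.trace_one, htr]
      simpa [Matrix.trace_fin_three] using htp
    have hdiag : ∀ j, ∑ i, (P i j)^2 = P j j := by
      intro j
      calc ∑ i, (P i j)^2 = ∑ i, P j i * P i j := by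
            refine Finset.sum_congr rfl fun i _ => ?_
            rw [sq, hPsymm i j]
        _ = P j j := hPP' j j
    obtain ⟨j, hj⟩ : ∃ j, 0 < P j j := by
      by_contra hcon
      push_neg at hcon
      nlinarith [hcon 0, hcon 1, hcon 2, htrP]
    have hA : ∑ i : Fin 3, ∑ k : Fin 3, (P i k)^2 = 1 := by
      have hstep : ∑ i : Fin 3, ∑ k : Fin 3, (P i k)^2 = ∑ i : Fin 3, P i i := by
        refine Finset.sum_congr rfl fun i _ => ?_
        rw [← hPP' i i]
        refine Finset.sum_congr rfl fun k _ => ?_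
        rw [sq]
        nth_rewrite 2 [hPsymm i k]
        rfl
      rw [hstep]
      simpa [Fin.sum_univ_three] using htrP
    have hB : ∑ i : Fin 3, ∑ k : Fin 3, P i j * (P i k * P k j) = P j j := by
      calc ∑ i : Fin 3, ∑ k : Fin 3, P i j * (P i k * P k j)
          = ∑ i : Fin 3, P i j * ∑ k : Fin 3, P i k * P k j := by
            exact Finset.sum_congr rfl fun i _ => (Finset.mul_sum _ _ _).symm
        _ = ∑ i : Fin 3, (P i j)^2 := by
            refine Finset.sum_congr rfl fun i _ => ?_
            rw [hPP' i j, sq]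
        _ = P j j := hdiag j
    have key : ∀ i k, P j j * P i k = P i j * P k j := by
      have hzero : ∑ i : Fin 3, ∑ k : Fin 3, (P j j * P i k - P i j * P k j)^2 = 0 := by
        have expand : ∑ i : Fin 3, ∑ k : Fin 3, (P j j * P i k - P i j * P k j)^2
            = (P j j)^2 * (∑ i : Fin 3, ∑ k : Fin 3, (P i k)^2)
              - 2 * P j j * (∑ i : Fin 3, ∑ k : Fin 3, P i j * (P i k * P k j))
              + (∑ i : Fin 3, (P i j)^2) * (∑ k : Fin 3, (P k j)^2) := by
          simp [Fin.sum_univ_three]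
          ring
        rw [expand, hA, hB, hdiag]
        ring
      intro i k
      have h1 := (Finset.sum_eq_zero_iff_of_nonneg
        (fun i _ => Finset.sum_nonneg fun k _ => sq_nonneg _)).1 hzero i (Finset.mem_univ i)
      have h2 := (Finset.sum_eq_zero_iff_of_nonneg (fun k _ => sq_nonneg _)).1 h1 k
        (Finset.mem_univ k)
      have h3' := pow_eq_zero_iff (n := 2) (by norm_num) |>.1 h2
      exact sub_eq_zero.mp h3'
    refine ⟨fun i => P i j / Real.sqrt (P j j), ?_, ?_⟩
    · have hc : Real.sqrt (P j j)^2 = P j j := Real.sq_sqrt hj.le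
      have : ∑ i : Fin 3, (P i j / Real.sqrt (P j j))^2 = (∑ i : Fin 3, (P i j)^2) / P j j := by
        rw [Finset.sum_div]
        refine Finset.sum_congr rfl fun i _ => ?_
        rw [div_pow, hc]
      rw [this, hdiag j]
      exact div_self hj.ne'
    · have hc : Real.sqrt (P j j) * Real.sqrt (P j j) = P j j := Real.mul_self_sqrt hj.le
      have hvec : Matrix.vecMulVec (fun i => P i j / Real.sqrt (P j j))
          (fun i => P i j / Real.sqrt (P j j)) = P := by
        funext i k
        rw [Matrix.vecMulVec_apply]
        show P i j / Real.sqrt (P j j) * (P k j / Real.sqrt (P j j)) = P i k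
        rw [div_mul_div_comm, hc, div_eq_iff hj.ne']
        linarith [key i k]
      rw [hvec, hsq32, hP_def, add_sub_cancel_right, smul_smul,
        show a/2 * (a/3) = 1 from by linear_combination (1/6)*ha, one_smul]
  · rintro ⟨n, hn, hQ⟩
    have hn' : n 0^2 + n 1^2 + n 2^2 = 1 := by simpa [Fin.sum_univ_three] using hn
    rw [hQ, hsq32]
    simp [Matrix.trace_fin_three, pow_succ, Matrix.mul_apply, Fin.sum_univ_three,
      Matrix.smul_apply, Matrix.sub_apply, Matrix.one_apply, Matrix.vecMulVec_apply]
    linear_combination ((a^2+6)/8 * ((n 0^2+n 1^2+n 2^2)^3 - (n 0^2+n 1^2+n 2^2)^2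
        + (n 0^2+n 1^2+n 2^2)/3 - 1/9)) * ha
      + (9/2)*((n 0^2+n 1^2+n 2^2)^2 + 1/3) * hn'
end

section
/- For any smooth map Q from an open set Ω ⊂ ℝⁿ into the unit sphere S⁴ of the space of symmetric traceless 3×3 matrices, the function B := √6 · tr(Q³) satisfies the pointwise bound |∇B| ≤ 3√3 · |∇Q|. -/
open EuclideanSpace

lemma trQ4 (M : Matrix (Fin 3) (Fin 3) ℝ) (hs : M.IsSymm) (ht : M.trace = 0)
    (hu : (M ^ 2).trace = 1) : ∑ a, ∑ b, ((M ^ 2) a b) ^ 2 = 1 / 2 := by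
  have h10 : M 1 0 = M 0 1 := (hs.apply 1 0).symm
  have h20 : M 2 0 = M 0 2 := (hs.apply 2 0).symm
  have h21 : M 2 1 = M 1 2 := (hs.apply 2 1).symm
  simp only [Matrix.trace, Matrix.diag, pow_two, Matrix.mul_apply, Fin.sum_univ_three] at ht hu ⊢
  rw [h10, h20, h21] at hu ⊢
  have h2 : M 2 2 = -M 0 0 - M 1 1 := by linarith
  rw [h2] at hu ⊢
  nlinarith [hu, sq_nonneg (M 0 0), sq_nonneg (M 1 1)]


/-- For a smooth map `Q : Ω → S⁴ ⊂ S₀` on an open set `Ω ⊂ ℝⁿ`, the biaxiality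
function `B = √6 · tr(Q³)` satisfies the pointwise bound `|∇B| ≤ 3√3 · |∇Q|`,
where `|∇B|² = ∑ₖ (∂ₖB)²` and `|∇Q|² = ∑ₖ ∑ᵢⱼ (∂ₖQᵢⱼ)²` (Frobenius norm). -/
theorem grad_biaxiality_le {n : ℕ} (Ω : Set (EuclideanSpace ℝ (Fin n))) (hΩ : IsOpen Ω)
    (Q : EuclideanSpace ℝ (Fin n) → Matrix (Fin 3) (Fin 3) ℝ)
    (hsmooth : ∀ i j, ContDiffOn ℝ (⊤ : ℕ∞) (fun y => Q y i j) Ω)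
    (hsymm : ∀ x ∈ Ω, (Q x).IsSymm)
    (htr : ∀ x ∈ Ω, (Q x).trace = 0)
    (hunit : ∀ x ∈ Ω, ((Q x) ^ 2).trace = 1)
    (x : EuclideanSpace ℝ (Fin n)) (hx : x ∈ Ω) :
    Real.sqrt (∑ k, (fderiv ℝ (fun y => Real.sqrt 6 * ((Q y) ^ 3).trace) x
        (EuclideanSpace.single k 1)) ^ 2) ≤
      3 * Real.sqrt 3 *
        Real.sqrt (∑ k, ∑ i, ∑ j,
          (fderiv ℝ (fun y => Q y i j) x (EuclideanSpace.single k 1)) ^ 2) := by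
  set D : Fin 3 → Fin 3 → (EuclideanSpace ℝ (Fin n)) →L[ℝ] ℝ :=
    fun i j => fderiv ℝ (fun y => Q y i j) x with hDdef
  have h : ∀ i j, HasFDerivAt (fun y => Q y i j) (D i j) x := fun i j =>
    (((hsmooth i j).contDiffAt (hΩ.mem_nhds hx)).differentiableAt (by simp)).hasFDerivAt
  have hf : HasFDerivAt (fun y => ((Q y) ^ 3).trace)
      (∑ i, ∑ j, ∑ l, ((Q x i l * Q x l j) • D j i
        + Q x j i • (Q x i l • D l j + Q x l j • D i l))) x := by
    have e1 : (fun y => ((Q y) ^ 3).trace)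
        = fun y => ∑ i, ∑ j, ∑ l, Q y i l * Q y l j * Q y j i := by
      funext y
      simp [pow_succ, Matrix.trace, Matrix.mul_apply, Finset.sum_mul, Fin.sum_univ_three]
      ring
    rw [e1]
    apply HasFDerivAt.fun_sum; intro i _
    apply HasFDerivAt.fun_sum; intro j _
    apply HasFDerivAt.fun_sum; intro l _
    exact ((h i l).mul (h l j)).mul (h j i)
  have hB : HasFDerivAt (fun y => Real.sqrt 6 * ((Q y) ^ 3).trace)
      (Real.sqrt 6 • (∑ i, ∑ j, ∑ l, ((Q x i l * Q x l j) • D j i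
        + Q x j i • (Q x i l • D l j + Q x l j • D i l)))) x := hf.const_mul _
  have key : ∀ e : EuclideanSpace ℝ (Fin n),
      fderiv ℝ (fun y => Real.sqrt 6 * ((Q y) ^ 3).trace) x e
        = Real.sqrt 6 * (3 * ∑ a, ∑ b, ((Q x) ^ 2) a b * D b a e) := by
    intro e
    rw [hB.fderiv]
    simp only [ContinuousLinearMap.smul_apply, ContinuousLinearMap.sum_apply,
      ContinuousLinearMap.add_apply, smul_eq_mul, pow_two, Matrix.mul_apply,
      Fin.sum_univ_three]
    ring
  have hbd : ∀ e : EuclideanSpace ℝ (Fin n),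
      (fderiv ℝ (fun y => Real.sqrt 6 * ((Q y) ^ 3).trace) x e) ^ 2
        ≤ 27 * ∑ a, ∑ b, (D a b e) ^ 2 := by
    intro e
    rw [key e]
    have hcs : (∑ a, ∑ b, ((Q x) ^ 2) a b * D b a e) ^ 2
        ≤ (∑ a, ∑ b, (((Q x) ^ 2) a b) ^ 2) * (∑ a, ∑ b, (D b a e) ^ 2) := by
      have := Finset.sum_mul_sq_le_sq_mul_sq Finset.univ
        (fun p : Fin 3 × Fin 3 => ((Q x) ^ 2) p.1 p.2) (fun p => D p.2 p.1 e)
      simpa [Fintype.sum_prod_type] using this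
    rw [trQ4 (Q x) (hsymm x hx) (htr x hx) (hunit x hx)] at hcs
    have hswap : (∑ a, ∑ b, (D b a e) ^ 2) = ∑ a, ∑ b, (D a b e) ^ 2 := Finset.sum_comm
    rw [hswap] at hcs
    have h6 : Real.sqrt 6 ^ 2 = 6 := Real.sq_sqrt (by norm_num)
    have hnn : (0:ℝ) ≤ ∑ a, ∑ b, (D a b e) ^ 2 :=
      Finset.sum_nonneg fun _ _ => Finset.sum_nonneg fun _ _ => sq_nonneg _
    calc (Real.sqrt 6 * (3 * ∑ a, ∑ b, ((Q x) ^ 2) a b * D b a e)) ^ 2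
        = 6 * 9 * (∑ a, ∑ b, ((Q x) ^ 2) a b * D b a e) ^ 2 := by
          rw [mul_pow, mul_pow, h6]; ring
      _ ≤ 6 * 9 * (1 / 2 * ∑ a, ∑ b, (D a b e) ^ 2) := by
          apply mul_le_mul_of_nonneg_left hcs (by norm_num)
      _ = 27 * ∑ a, ∑ b, (D a b e) ^ 2 := by ring
  -- combine over k
  have hsum : (∑ k, (fderiv ℝ (fun y => Real.sqrt 6 * ((Q y) ^ 3).trace) x
        (EuclideanSpace.single k 1)) ^ 2)
      ≤ 27 * ∑ k, ∑ i, ∑ j, (D i j (EuclideanSpace.single k 1)) ^ 2 := by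
    rw [Finset.mul_sum]
    exact Finset.sum_le_sum fun k _ => hbd _
  have h27 : Real.sqrt 27 = 3 * Real.sqrt 3 := by
    rw [show (27:ℝ) = 3 ^ 2 * 3 by norm_num, Real.sqrt_mul (by positivity),
      Real.sqrt_sq (by norm_num)]
  calc Real.sqrt (∑ k, (fderiv ℝ (fun y => Real.sqrt 6 * ((Q y) ^ 3).trace) x
        (EuclideanSpace.single k 1)) ^ 2)
      ≤ Real.sqrt (27 * ∑ k, ∑ i, ∑ j, (D i j (EuclideanSpace.single k 1)) ^ 2) :=
        Real.sqrt_le_sqrt hsum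
    _ = 3 * Real.sqrt 3 * Real.sqrt (∑ k, ∑ i, ∑ j, (D i j (EuclideanSpace.single k 1)) ^ 2) := by
        rw [Real.sqrt_mul (by norm_num), h27]
    _ = _ := rfl
end

section
/- Let f = (f₀, f₁, f₂): (0,1] → ℝ × ℂ × ℂ be continuous with |f(r)| = 1 for all r, and suppose ∫₀¹ (|f′|² + (|f₁|² + 4|f₂|²)/r²) r dr < ∞ with f absolutely continuous. Then f₁(r) → 0 and f₂(r) → 0 as r → 0⁺, and f₀(r) converges to either 1 or −1 as r → 0⁺. In particular f extends continuously to [0,1] with f(0) = (±1, 0, 0). -/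
/-! For `g = f₁` or `f₂`, the derivative `2⟪g, g'⟫` of `‖g‖²` is bounded by `‖g'‖² r + ‖g‖² / r`
(AM-GM), which finite energy makes integrable near `0`, so `‖g‖²` has a limit at `0⁺`. As
`‖g‖² / r` is integrable too while `1 / r` is not, that limit is `0`. Hence `f₀² → 1`, and since
`f₀` is continuous and bounded away from `0` near `0⁺`, it has constant sign there. -/

open MeasureTheory Filter Set Topology Asymptotics

theorem aestronglyMeasurable_of_hasDerivAt {F : Type*} [NormedAddCommGroup F] [NormedSpace ℝ F]
    [CompleteSpace F] {f f' : ℝ → F} {s : Set ℝ} {μ : Measure ℝ} (hs : MeasurableSet s)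
    (hf : ∀ x ∈ s, HasDerivAt f (f' x) x) : AEStronglyMeasurable f' (μ.restrict s) :=
  (aestronglyMeasurable_deriv f _).congr <|
    (ae_restrict_iff' hs).2 <| ae_of_all _ fun x hx => (hf x hx).deriv

theorem tendsto_nhdsGT_of_hasDerivAt_of_integrableOn {E : Type*} [NormedAddCommGroup E]
    [NormedSpace ℝ E] [CompleteSpace E] {f f' : ℝ → E} {a b : ℝ} (hab : a < b)
    (hf : ∀ x ∈ Ioc a b, HasDerivAt f (f' x) x) (hf' : IntegrableOn f' (Ioc a b)) :
    Tendsto f (𝓝[>] a) (𝓝 (f b - ∫ x in a..b, f' x)) := by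
  have hprim : ContinuousWithinAt (fun x => ∫ t in x..b, f' t) (Ioc a b) a := by
    have := intervalIntegral.continuousOn_primitive_interval_left
      (by rw [uIcc_of_le hab.le]; exact (integrableOn_Icc_iff_integrableOn_Ioc).2 hf')
    exact (this a left_mem_uIcc).mono (Ioc_subset_Icc_self.trans Icc_subset_uIcc)
  rw [← nhdsWithin_Ioc_eq_nhdsGT hab]
  refine (hprim.const_sub (f b)).congr' ?_
  filter_upwards [self_mem_nhdsWithin] with x hx
  rw [intervalIntegral.integral_eq_sub_of_hasDerivAt, sub_sub_cancel]
  · intro t ht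
    rw [uIcc_of_le hx.2] at ht
    exact hf t ⟨hx.1.trans_le ht.1, ht.2⟩
  · exact (intervalIntegrable_iff_integrableOn_Ioc_of_le hx.2).2
      (hf'.mono_set (Ioc_subset_Ioc_left hx.1.le))

theorem eq_zero_of_tendsto_of_integrableOn_div {h : ℝ → ℝ} {L b : ℝ} (hb : 0 < b)
    (hlim : Tendsto h (𝓝[>] 0) (𝓝 L)) (hint : IntegrableOn (fun x => h x / x) (Ioc 0 b)) :
    L = 0 := by
  by_contra hL
  have hone : (fun _ => (1 : ℝ)) =O[𝓝[>] 0] h := by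
    rw [isBigO_const_left_iff_pos_le_norm one_ne_zero]
    exact ⟨‖L‖ / 2, by positivity,
      hlim.norm.eventually (eventually_ge_nhds (by simpa using hL))⟩
  have hlog : Tendsto (fun x => ‖Real.log x‖) (𝓝[>] 0) atTop := by
    simpa only [Real.norm_eq_abs, Function.comp_def] using
      tendsto_abs_atBot_atTop.comp Real.tendsto_log_nhdsGT_zero
  -- `x⁻¹ = log' x` with `‖log x‖ → ∞`, so nothing dominating `x⁻¹` is integrable at `0⁺`
  refine not_integrableOn_of_tendsto_norm_atTop_of_deriv_isBigO_filter (𝓝[>] 0)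
    (Ioc_mem_nhdsGT hb) ?_ hlog ?_ hint
  · filter_upwards [self_mem_nhdsWithin] with x hx
    exact Real.differentiableAt_log hx.ne'
  · simpa [Real.deriv_log', div_eq_mul_inv] using hone.mul (isBigO_refl (fun x : ℝ => x⁻¹) _)

theorem two_mul_mul_le_sq_div_add_sq_mul (x y : ℝ) {r : ℝ} (hr : 0 < r) :
    2 * (x * y) ≤ x ^ 2 / r + y ^ 2 * r := by
  have hgap : x ^ 2 / r + y ^ 2 * r - 2 * (x * y) = (x - y * r) ^ 2 / r := by
    field_simp
    ring
  nlinarith [div_nonneg (sq_nonneg (x - y * r)) hr.le]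

theorem tendsto_nhdsGT_zero_of_energy_le {F : Type*} [NormedAddCommGroup F]
    [InnerProductSpace ℝ F] {g g' : ℝ → F} {M : ℝ → ℝ} {b : ℝ} (hb : 0 < b)
    (hg : ∀ r ∈ Ioc 0 b, HasDerivAt g (g' r) r) (hM : IntegrableOn M (Ioc 0 b))
    (hle : ∀ r ∈ Ioc 0 b, ‖g' r‖ ^ 2 * r + ‖g r‖ ^ 2 / r ≤ M r) :
    Tendsto g (𝓝[>] 0) (𝓝 0) := by
  set h : ℝ → ℝ := fun r => ‖g r‖ ^ 2
  have hh : ∀ r ∈ Ioc 0 b, HasDerivAt h (2 * inner ℝ (g r) (g' r)) r :=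
    fun r hr => (hg r hr).norm_sq
  have hh'_le : ∀ r ∈ Ioc 0 b, ‖2 * inner ℝ (g r) (g' r)‖ ≤ M r := fun r hr =>
    calc ‖2 * inner ℝ (g r) (g' r)‖ ≤ 2 * (‖g r‖ * ‖g' r‖) := by
          rw [norm_mul, Real.norm_two]
          gcongr
          exact norm_inner_le_norm _ _
      _ ≤ ‖g r‖ ^ 2 / r + ‖g' r‖ ^ 2 * r := two_mul_mul_le_sq_div_add_sq_mul _ _ hr.1
      _ ≤ M r := by linarith [hle r hr]
  have hh'_int : IntegrableOn (fun r => 2 * inner ℝ (g r) (g' r)) (Ioc 0 b) :=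
    hM.mono' (aestronglyMeasurable_of_hasDerivAt measurableSet_Ioc hh)
      ((ae_restrict_iff' measurableSet_Ioc).2 (ae_of_all _ hh'_le))
  have hdiv_int : IntegrableOn (fun r => h r / r) (Ioc 0 b) := by
    have hcont : ContinuousOn (fun r => h r / r) (Ioc 0 b) :=
      ContinuousOn.div (fun r hr => (hh r hr).continuousAt.continuousWithinAt)
        continuousOn_id fun r hr => hr.1.ne'
    refine hM.mono' (hcont.aestronglyMeasurable measurableSet_Ioc)
      ((ae_restrict_iff' measurableSet_Ioc).2 (ae_of_all _ fun r hr => ?_))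
    rw [Real.norm_of_nonneg (div_nonneg (by positivity) hr.1.le)]
    linarith [hle r hr, mul_nonneg (sq_nonneg ‖g' r‖) hr.1.le]
  have hlim := tendsto_nhdsGT_of_hasDerivAt_of_integrableOn hb hh hh'_int
  rw [eq_zero_of_tendsto_of_integrableOn_div hb hlim hdiv_int] at hlim
  refine tendsto_zero_iff_norm_tendsto_zero.2 ?_
  simpa [h, Real.sqrt_sq (norm_nonneg _)] using hlim.sqrt

theorem tendsto_or_tendsto_neg_of_tendsto_abs {f : ℝ → ℝ} {a b c : ℝ} (hab : a < b)
    (hf : ContinuousOn f (Ioo a b)) (hc : c ≠ 0)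
    (hlim : Tendsto (fun x => |f x|) (𝓝[>] a) (𝓝 c)) :
    Tendsto f (𝓝[>] a) (𝓝 c) ∨ Tendsto f (𝓝[>] a) (𝓝 (-c)) := by
  obtain ⟨ε, hε, hsub⟩ := mem_nhdsGT_iff_exists_Ioo_subset.1
    ((hlim.eventually_ne hc).and (Ioo_mem_nhdsGT hab))
  have hS : Ioo a ε ∈ 𝓝[>] a := Ioo_mem_nhdsGT hε
  have hfS : ContinuousOn f (Ioo a ε) := hf.mono fun x hx => (hsub hx).2
  rcases isPreconnected_Ioo.eq_or_eq_neg_of_sq_eq hfS hfS.abs (fun x _ => (sq_abs (f x)).symm)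
    (fun hx => (hsub hx).1) with hpos | hneg
  · exact Or.inl (hlim.congr' (hpos.eventuallyEq_of_mem hS).symm)
  · exact Or.inr (hlim.neg.congr' (hneg.eventuallyEq_of_mem hS).symm)

theorem equivariant_continuity_at_origin_general
    (f₀ f₀' : ℝ → ℝ) (f₁ f₁' f₂ f₂' : ℝ → ℂ)
    (hcont₀ : ContinuousOn f₀ (Set.Ioc (0 : ℝ) 1))
    (hnorm : ∀ r ∈ Set.Ioc (0 : ℝ) 1, (f₀ r) ^ 2 + ‖f₁ r‖ ^ 2 + ‖f₂ r‖ ^ 2 = 1)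
    (hderiv₁ : ∀ r ∈ Set.Ioc (0 : ℝ) 1, HasDerivAt f₁ (f₁' r) r)
    (hderiv₂ : ∀ r ∈ Set.Ioc (0 : ℝ) 1, HasDerivAt f₂ (f₂' r) r)
    (hint : IntegrableOn
      (fun r => ((f₀' r) ^ 2 + ‖f₁' r‖ ^ 2 + ‖f₂' r‖ ^ 2
        + (‖f₁ r‖ ^ 2 + 4 * ‖f₂ r‖ ^ 2) / r ^ 2) * r) (Set.Ioc 0 1)) :
    Tendsto f₁ (nhdsWithin 0 (Set.Ioi 0)) (nhds 0) ∧
    Tendsto f₂ (nhdsWithin 0 (Set.Ioi 0)) (nhds 0) ∧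
    (Tendsto f₀ (nhdsWithin 0 (Set.Ioi 0)) (nhds 1) ∨
      Tendsto f₀ (nhdsWithin 0 (Set.Ioi 0)) (nhds (-1))) := by
  have hsplit : ∀ r ∈ Ioc (0 : ℝ) 1, ((f₀' r) ^ 2 + ‖f₁' r‖ ^ 2 + ‖f₂' r‖ ^ 2
      + (‖f₁ r‖ ^ 2 + 4 * ‖f₂ r‖ ^ 2) / r ^ 2) * r
      = (f₀' r ^ 2 + ‖f₁' r‖ ^ 2 + ‖f₂' r‖ ^ 2) * r + (‖f₁ r‖ ^ 2 + 4 * ‖f₂ r‖ ^ 2) / r := by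
    intro r hr
    field_simp [hr.1.ne']
  have hf₁ : Tendsto f₁ (𝓝[>] 0) (𝓝 0) := by
    refine tendsto_nhdsGT_zero_of_energy_le one_pos hderiv₁ hint fun r hr => ?_
    have hr₀ := hr.1.le
    rw [hsplit r hr]
    gcongr ?_ * r + ?_ / r <;> nlinarith
  have hf₂ : Tendsto f₂ (𝓝[>] 0) (𝓝 0) := by
    refine tendsto_nhdsGT_zero_of_energy_le one_pos hderiv₂ hint fun r hr => ?_
    have hr₀ := hr.1.le
    rw [hsplit r hr]
    gcongr ?_ * r + ?_ / r <;> nlinarith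
  refine ⟨hf₁, hf₂, ?_⟩
  have hsq : Tendsto (fun r => f₀ r ^ 2) (𝓝[>] 0) (𝓝 1) := by
    have h : Tendsto (fun r => 1 - ‖f₁ r‖ ^ 2 - ‖f₂ r‖ ^ 2) (𝓝[>] 0) (𝓝 1) := by
      simpa using (tendsto_const_nhds.sub (hf₁.norm.pow 2)).sub (hf₂.norm.pow 2)
    refine h.congr' ?_
    filter_upwards [Ioc_mem_nhdsGT one_pos] with r hr
    linarith [hnorm r hr]
  have habs : Tendsto (fun r => |f₀ r|) (𝓝[>] 0) (𝓝 1) := by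
    simpa [Real.sqrt_sq_eq_abs] using hsq.sqrt
  simpa using tendsto_or_tendsto_neg_of_tendsto_abs one_pos (hcont₀.mono Ioo_subset_Ioc_self)
    one_ne_zero habs

/-- Let `f = (f₀, f₁, f₂) : (0,1] → ℝ × ℂ × ℂ` be continuous of unit norm, absolutely
continuous (here: differentiable with derivatives `f₀', f₁', f₂'`), with finite energy
`∫₀¹ (|f′|² + (|f₁|² + 4|f₂|²)/r²) r dr < ∞`.  Then `f₁(r) → 0`, `f₂(r) → 0` as `r → 0⁺`,
and `f₀(r)` converges to either `1` or `−1` as `r → 0⁺`. -/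
theorem equivariant_continuity_at_origin
    (f₀ f₀' : ℝ → ℝ) (f₁ f₁' f₂ f₂' : ℝ → ℂ)
    (hcont₀ : ContinuousOn f₀ (Set.Ioc (0 : ℝ) 1))
    (hcont₁ : ContinuousOn f₁ (Set.Ioc (0 : ℝ) 1))
    (hcont₂ : ContinuousOn f₂ (Set.Ioc (0 : ℝ) 1))
    (hnorm : ∀ r ∈ Set.Ioc (0 : ℝ) 1, (f₀ r) ^ 2 + ‖f₁ r‖ ^ 2 + ‖f₂ r‖ ^ 2 = 1)
    (hderiv₀ : ∀ r ∈ Set.Ioc (0 : ℝ) 1, HasDerivAt f₀ (f₀' r) r)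
    (hderiv₁ : ∀ r ∈ Set.Ioc (0 : ℝ) 1, HasDerivAt f₁ (f₁' r) r)
    (hderiv₂ : ∀ r ∈ Set.Ioc (0 : ℝ) 1, HasDerivAt f₂ (f₂' r) r)
    (hint : IntegrableOn
      (fun r => ((f₀' r) ^ 2 + ‖f₁' r‖ ^ 2 + ‖f₂' r‖ ^ 2
        + (‖f₁ r‖ ^ 2 + 4 * ‖f₂ r‖ ^ 2) / r ^ 2) * r) (Set.Ioc 0 1)) :
    Tendsto f₁ (nhdsWithin 0 (Set.Ioi 0)) (nhds 0) ∧
    Tendsto f₂ (nhdsWithin 0 (Set.Ioi 0)) (nhds 0) ∧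
    (Tendsto f₀ (nhdsWithin 0 (Set.Ioi 0)) (nhds 1) ∨
      Tendsto f₀ (nhdsWithin 0 (Set.Ioi 0)) (nhds (-1))) :=
  equivariant_continuity_at_origin_general f₀ f₀' f₁ f₁' f₂ f₂' hcont₀ hnorm hderiv₁ hderiv₂ hint
end

section
/- The map Q*: ℝ³ \ {0} → S⁴ ⊂ S₀ defined by Q*(x) = (1/(√6·|x|))·[[−x₃, 0, √3 x₁], [0, −x₃, √3 x₂], [√3 x₁, √3 x₂, 2x₃]] satisfies |∇Q*(x)|² = 2/|x|² for all x ≠ 0. Consequently, for every ρ > 0, (1/ρ)·∫_{B_ρ} (1/2)|∇Q*|² dx = 4π. -/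
/-!
`Q*(x) = L (x / ‖x‖)` for a linear isometry `L : ℝ³ → ℝ³ˣ³`: the matrix in the definition
of `Q*` has squared Frobenius norm `6 ‖x‖²`. The differential of `x ↦ x / ‖x‖` is `‖x‖⁻¹`
times the orthogonal projection onto `x⊥`, so the squared partials of `L (x / ‖x‖)` along an
orthonormal basis of `ℝⁿ` sum to `(n - 1) / ‖x‖²`, which is `2 / ‖x‖²` for `n = 3`.
In polar coordinates, `∫_{B_ρ} ‖x‖⁻² dx = |S²| ∫₀^ρ r² r⁻² dr = 4πρ`.
-/

open MeasureTheory

/-- The degree-zero homogeneous tangent map `Q* : ℝ³ \ {0} → S⁴ ⊂ S₀`. -/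
noncomputable def Qstar (x : EuclideanSpace ℝ (Fin 3)) : Matrix (Fin 3) (Fin 3) ℝ :=
  (Real.sqrt 6 * ‖x‖)⁻¹ •
    !![-(x 2), 0, Real.sqrt 3 * x 0;
       0, -(x 2), Real.sqrt 3 * x 1;
       Real.sqrt 3 * x 0, Real.sqrt 3 * x 1, 2 * x 2]

/-- The Frobenius gradient squared `|∇Q*|² = ∑ₖ ∑ᵢⱼ (∂ₖ(Q*)ᵢⱼ)²`. -/
noncomputable def QstarGradSq (x : EuclideanSpace ℝ (Fin 3)) : ℝ :=
  ∑ k, ∑ i, ∑ j,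
    (fderiv ℝ (fun y => Qstar y i j) x (EuclideanSpace.single k 1)) ^ 2

open Metric Set
open scoped RealInnerProductSpace

section RadialProjection

variable {E : Type*} [NormedAddCommGroup E] [InnerProductSpace ℝ E] {x : E}

theorem hasFDerivAt_norm_of_ne_zero (hx : x ≠ 0) :
    HasFDerivAt (fun y : E => ‖y‖) (‖x‖⁻¹ • innerSL ℝ x) x := by
  have h := (hasStrictFDerivAt_norm_sq x).hasFDerivAt.sqrt (by positivity)
  simp only [Real.sqrt_sq (norm_nonneg _)] at h
  refine h.congr_fderiv ?_
  rw [← Nat.cast_smul_eq_nsmul ℝ, smul_smul]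
  congr 1
  field_simp
  norm_num

theorem hasFDerivAt_inv_norm_smul (hx : x ≠ 0) :
    HasFDerivAt (fun y : E => ‖y‖⁻¹ • y)
      (‖x‖⁻¹ • (ContinuousLinearMap.id ℝ E - (‖x‖ ^ 2)⁻¹ • (innerSL ℝ x).smulRight x)) x := by
  have hinv := (hasDerivAt_inv (norm_ne_zero_iff.2 hx)).comp_hasFDerivAt x
    (hasFDerivAt_norm_of_ne_zero hx)
  refine (hinv.smul (hasFDerivAt_id x)).congr_fderiv ?_
  ext v
  simp only [smul_apply, sub_apply, add_apply, ContinuousLinearMap.smulRight_apply,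
    ContinuousLinearMap.id_apply, innerSL_apply_apply, Function.comp_apply, id]
  module

theorem norm_sub_inner_div_smul_sq (hx : x ≠ 0) (v : E) :
    ‖v - (⟪x, v⟫ / ‖x‖ ^ 2) • x‖ ^ 2 = ‖v‖ ^ 2 - ⟪x, v⟫ ^ 2 / ‖x‖ ^ 2 := by
  have : ‖x‖ ≠ 0 := norm_ne_zero_iff.2 hx
  rw [norm_sub_sq_real, inner_smul_right, norm_smul, Real.norm_eq_abs, mul_pow, sq_abs,
    real_inner_comm]
  field_simp
  ring

theorem OrthonormalBasis.sum_norm_sub_inner_div_smul_sq {ι : Type*} [Fintype ι]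
    (b : OrthonormalBasis ι ℝ E) (hx : x ≠ 0) :
    ∑ i, ‖b i - (⟪x, b i⟫ / ‖x‖ ^ 2) • x‖ ^ 2 = Fintype.card ι - 1 := by
  have : ‖x‖ ≠ 0 := norm_ne_zero_iff.2 hx
  simp only [norm_sub_inner_div_smul_sq hx, b.orthonormal.1, Finset.sum_sub_distrib,
    ← Finset.sum_div, b.sum_sq_inner_left]
  simp [this]

theorem LinearIsometry.sum_norm_fderiv_comp_inv_norm_smul_sq {F ι : Type*}
    [NormedAddCommGroup F] [NormedSpace ℝ F] [Fintype ι] (L : E →ₗᵢ[ℝ] F)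
    (b : OrthonormalBasis ι ℝ E) (hx : x ≠ 0) :
    ∑ i, ‖fderiv ℝ (fun y => L (‖y‖⁻¹ • y)) x (b i)‖ ^ 2 = (Fintype.card ι - 1) / ‖x‖ ^ 2 := by
  have hL := (L.toContinuousLinearMap.hasFDerivAt.comp x (hasFDerivAt_inv_norm_smul hx)).fderiv
  simp only [Function.comp_def, LinearIsometry.coe_toContinuousLinearMap] at hL
  simp only [hL, ContinuousLinearMap.comp_apply, LinearIsometry.coe_toContinuousLinearMap,
    LinearIsometry.norm_map, smul_apply, sub_apply, ContinuousLinearMap.id_apply,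
    ContinuousLinearMap.smulRight_apply, innerSL_apply_apply, norm_smul, mul_pow, norm_inv,
    norm_norm]
  rw [← Finset.mul_sum]
  simp only [smul_smul, inv_mul_eq_div, b.sum_norm_sub_inner_div_smul_sq hx]
  rw [inv_pow, inv_mul_eq_div]

end RadialProjection

/-- Matrices are indexed by `Fin 3 × Fin 3`, so that the Euclidean norm is the Frobenius norm. -/
noncomputable def qstarIsometry :
    EuclideanSpace ℝ (Fin 3) →ₗᵢ[ℝ] EuclideanSpace ℝ (Fin 3 × Fin 3) where
  toFun x := WithLp.toLp 2 fun p => (Real.sqrt 6)⁻¹ *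
    !![-(x 2), 0, Real.sqrt 3 * x 0;
       0, -(x 2), Real.sqrt 3 * x 1;
       Real.sqrt 3 * x 0, Real.sqrt 3 * x 1, 2 * x 2] p.1 p.2
  map_add' x y := by
    ext ⟨i, j⟩
    fin_cases i <;> fin_cases j <;> simp <;> ring
  map_smul' c x := by
    ext ⟨i, j⟩
    fin_cases i <;> fin_cases j <;> simp <;> ring
  norm_map' x := by
    have h6 : Real.sqrt 6 ^ 2 = 6 := Real.sq_sqrt (by norm_num)
    have h3 : Real.sqrt 3 ^ 2 = 3 := Real.sq_sqrt (by norm_num)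
    rw [← sq_eq_sq₀ (norm_nonneg _) (norm_nonneg _), EuclideanSpace.real_norm_sq_eq,
      EuclideanSpace.real_norm_sq_eq, Fintype.sum_prod_type]
    simp only [LinearMap.coe_mk, AddHom.coe_mk, Fin.sum_univ_three, Matrix.of_apply,
      Matrix.cons_val', Matrix.cons_val_zero, Matrix.cons_val_one, Matrix.cons_val,
      Matrix.cons_val_fin_one]
    field_simp
    linear_combination (-(x 0 ^ 2 + x 1 ^ 2 + x 2 ^ 2)) * h6 + 2 * (x 0 ^ 2 + x 1 ^ 2) * h3

theorem Qstar_apply (y : EuclideanSpace ℝ (Fin 3)) (i j : Fin 3) :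
    Qstar y i j = qstarIsometry (‖y‖⁻¹ • y) (i, j) := by
  fin_cases i <;> fin_cases j <;> simp [Qstar, qstarIsometry] <;> ring

theorem QstarGradSq_eq_sum_norm_fderiv_sq {x : EuclideanSpace ℝ (Fin 3)} (hx : x ≠ 0) :
    QstarGradSq x = ∑ k, ‖fderiv ℝ (fun y => qstarIsometry (‖y‖⁻¹ • y)) x
      (EuclideanSpace.basisFun (Fin 3) ℝ k)‖ ^ 2 := by
  have hu := (qstarIsometry.toContinuousLinearMap.hasFDerivAt.comp x
    (hasFDerivAt_inv_norm_smul hx)).differentiableAt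
  have hentry (i j : Fin 3) (v : EuclideanSpace ℝ (Fin 3)) :
      fderiv ℝ (fun y => Qstar y i j) x v
        = fderiv ℝ (fun y => qstarIsometry (‖y‖⁻¹ • y)) x v (i, j) := by
    simp only [Qstar_apply]
    exact congrArg (· v) ((EuclideanSpace.proj (i, j)).hasFDerivAt.comp x hu.hasFDerivAt).fderiv
  simp only [QstarGradSq, EuclideanSpace.real_norm_sq_eq, Fintype.sum_prod_type, hentry,
    EuclideanSpace.basisFun_apply]

theorem QstarGradSq_eq {x : EuclideanSpace ℝ (Fin 3)} (hx : x ≠ 0) :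
    QstarGradSq x = 2 / ‖x‖ ^ 2 := by
  rw [QstarGradSq_eq_sum_norm_fderiv_sq hx,
    qstarIsometry.sum_norm_fderiv_comp_inv_norm_smul_sq _ hx]
  norm_num

theorem integral_Ioi_pow_smul_indicator_inv_sq {n : ℕ} (hn : 3 ≤ n) {ρ : ℝ} (hρ : 0 ≤ ρ) :
    ∫ y in Ioi 0, y ^ (n - 1) • (Iio ρ).indicator (fun r : ℝ => (r ^ 2)⁻¹) y
      = ρ ^ (n - 2) / (n - 2) := by
  obtain ⟨m, rfl⟩ : ∃ m, n = m + 3 := ⟨n - 3, by omega⟩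
  have hpow : EqOn (fun y : ℝ => y ^ (m + 3 - 1) • (y ^ 2)⁻¹) (fun y => y ^ m) (Ioo 0 ρ) := by
    intro y hy
    dsimp only
    rw [show m + 3 - 1 = m + 2 by omega, smul_eq_mul, pow_add,
      mul_inv_cancel_right₀ (pow_ne_zero 2 hy.1.ne')]
  rw [← indicator_smul (Iio ρ) (fun y : ℝ => y ^ (m + 3 - 1)),
    setIntegral_indicator measurableSet_Iio, Ioi_inter_Iio,
    setIntegral_congr_fun measurableSet_Ioo hpow, ← integral_Ioc_eq_integral_Ioo,
    ← intervalIntegral.integral_of_le hρ, integral_pow]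
  push_cast
  ring

theorem integral_ball_inv_norm_sq {E : Type*} [NormedAddCommGroup E] [NormedSpace ℝ E]
    [FiniteDimensional ℝ E] [MeasurableSpace E] [BorelSpace E] (μ : Measure E)
    [μ.IsAddHaarMeasure] (hE : 3 ≤ Module.finrank ℝ E) {ρ : ℝ} (hρ : 0 ≤ ρ) :
    ∫ x in ball (0 : E) ρ, (‖x‖ ^ 2)⁻¹ ∂μ
      = Module.finrank ℝ E * μ.real (ball 0 1) * ρ ^ (Module.finrank ℝ E - 2)
          / (Module.finrank ℝ E - 2) := by
  have : Nontrivial E := Module.nontrivial_of_finrank_pos (R := ℝ) (by omega)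
  have hradial : (ball (0 : E) ρ).indicator (fun x => (‖x‖ ^ 2)⁻¹)
      = fun x => (Iio ρ).indicator (fun r : ℝ => (r ^ 2)⁻¹) ‖x‖ := by
    ext x
    simp [indicator]
  rw [← integral_indicator measurableSet_ball, hradial, integral_fun_norm_addHaar μ,
    integral_Ioi_pow_smul_indicator_inv_sq hE hρ, nsmul_eq_mul, smul_eq_mul]
  ring

theorem setIntegral_ball_half_QstarGradSq {ρ : ℝ} (hρ : 0 ≤ ρ) :
    ∫ x in ball (0 : EuclideanSpace ℝ (Fin 3)) ρ, (1 / 2) * QstarGradSq x = 4 * Real.pi * ρ := by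
  calc ∫ x in ball (0 : EuclideanSpace ℝ (Fin 3)) ρ, (1 / 2) * QstarGradSq x
      = ∫ x in ball (0 : EuclideanSpace ℝ (Fin 3)) ρ, (‖x‖ ^ 2)⁻¹ := by
        refine setIntegral_congr_ae measurableSet_ball ?_
        filter_upwards [Measure.ae_ne volume 0] with x hx _
        rw [QstarGradSq_eq hx]
        ring
    _ = 4 * Real.pi * ρ := by
        rw [integral_ball_inv_norm_sq volume (by simp) hρ, finrank_euclideanSpace_fin,
          measureReal_def, EuclideanSpace.volume_ball_fin_three, ENNReal.ofReal_one, one_pow,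
          one_mul, ENNReal.toReal_ofReal (by positivity)]
        ring

/-- `|∇Q*(x)|² = 2/|x|²` for all `x ≠ 0`; consequently
`(1/ρ)·∫_{B_ρ} (1/2)|∇Q*|² dx = 4π` for every `ρ > 0`. -/
theorem Qstar_gradient_and_energy :
    (∀ x : EuclideanSpace ℝ (Fin 3), x ≠ 0 → QstarGradSq x = 2 / ‖x‖ ^ 2) ∧
    (∀ ρ : ℝ, 0 < ρ →
      (1 / ρ) * ∫ x in Metric.ball (0 : EuclideanSpace ℝ (Fin 3)) ρ,
        (1 / 2) * QstarGradSq x = 4 * Real.pi) := by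
  refine ⟨fun x hx => QstarGradSq_eq hx, fun ρ hρ => ?_⟩
  rw [setIntegral_ball_half_QstarGradSq hρ.le]
  field_simp
end
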